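/- arXiv:1006.3889 — 3 statements merged into one kernel-verified Lean document; each statement's English description precedes it below -/
import Mathlib

section
/- Let Ω ⊆ ℝⁿ (n ≥ 2) be a convex domain invariant under all orthogonal transformations (e.g. an open ball centered at the origin, or all of ℝⁿ) and let F be a Finsler metric on Ω. Then F is spherically symmetric, i.e. F(Ax, Ay) = F(x,y) for every orthogonal matrix A ∈ O(n), every x ∈ Ω and every y ∈ ℝⁿ, if and only if there exists a positive function φ(r,u,v) of three real variables such that F(x,y) = φ(‖x‖, ‖y‖, ⟨x,y⟩) for all x ∈ Ω and y ∈ ℝⁿ∖{0}, where ‖·‖ and ⟨·,·⟩ denote the Euclidean norm and inner product on ℝⁿ. -/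
open scoped RealInnerProductSpace BigOperators

noncomputable section

abbrev E (n : ℕ) := EuclideanSpace ℝ (Fin n)

/-- Partial derivative of `F(x,y)` in the direction `∂/∂yⁱ`. -/
def pdy {n : ℕ} (F : E n → E n → ℝ) (i : Fin n) (x y : E n) : ℝ :=
  deriv (fun t : ℝ => F x (y + t • EuclideanSpace.single i (1 : ℝ))) 0

/-- Fundamental tensor `g_ij = ½ ∂²(F²)/∂yⁱ∂yʲ`. -/
def gF {n : ℕ} (F : E n → E n → ℝ) (i j : Fin n) (x y : E n) : ℝ :=
  (1 / 2) * pdy (fun a b => pdy (fun c d => (F c d) ^ 2) i a b) j x y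

/-- A Finsler metric on an open set `U ⊆ ℝⁿ`: smooth on `U × (ℝⁿ∖{0})`, positive for
`y ≠ 0`, positively 1-homogeneous in `y`, with positive definite fundamental tensor. -/
def IsFinslerMetric {n : ℕ} (U : Set (E n)) (F : E n → E n → ℝ) : Prop :=
  ContDiffOn ℝ (⊤ : ℕ∞) (fun p : E n × E n => F p.1 p.2) (U ×ˢ {y : E n | y ≠ 0}) ∧
  (∀ x ∈ U, ∀ y : E n, y ≠ 0 → 0 < F x y) ∧
  (∀ x ∈ U, ∀ y : E n, ∀ c : ℝ, 0 < c → F x (c • y) = c * F x y) ∧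
  (∀ x ∈ U, ∀ y : E n, y ≠ 0 → (Matrix.of fun i j => gF F i j x y).PosDef)

/-- Two pairs of vectors with the same Gram data are related by a linear isometry. -/
lemma exists_isometry_of_gram_eq {n : ℕ} (v w v' w' : E n)
    (h1 : ‖v‖ = ‖v'‖) (h2 : ‖w‖ = ‖w'‖) (h3 : ⟪v, w⟫ = ⟪v', w'⟫) :
    ∃ A : E n ≃ₗᵢ[ℝ] E n, A v = v' ∧ A w = w' := by
  classical
  let T : (ℝ × ℝ) →ₗ[ℝ] E n :=
    (LinearMap.smulRight (LinearMap.fst ℝ ℝ ℝ) v) + (LinearMap.smulRight (LinearMap.snd ℝ ℝ ℝ) w)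
  let T' : (ℝ × ℝ) →ₗ[ℝ] E n :=
    (LinearMap.smulRight (LinearMap.fst ℝ ℝ ℝ) v') + (LinearMap.smulRight (LinearMap.snd ℝ ℝ ℝ) w')
  have hT : ∀ p : ℝ × ℝ, T p = p.1 • v + p.2 • w := fun p => rfl
  have hT' : ∀ p : ℝ × ℝ, T' p = p.1 • v' + p.2 • w' := fun p => rfl
  have hnorm : ∀ p : ℝ × ℝ, ‖T p‖ = ‖T' p‖ := by
    intro p
    have e1 : ‖T p‖ ^ 2 = ‖T' p‖ ^ 2 := by
      rw [hT, hT', norm_add_sq_real, norm_add_sq_real]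
      simp only [norm_smul, real_inner_smul_left, real_inner_smul_right, mul_pow]
      rw [h1, h2, h3]
    have h0 := norm_nonneg (T p)
    have h0' := norm_nonneg (T' p)
    nlinarith [e1]
  have hker : LinearMap.ker T ≤ LinearMap.ker T' := by
    intro p hp
    have : ‖T' p‖ = 0 := by rw [← hnorm]; simp [LinearMap.mem_ker.mp hp]
    simpa using norm_eq_zero.mp this
  let q : ((ℝ × ℝ) ⧸ LinearMap.ker T) →ₗ[ℝ] E n := Submodule.liftQ _ T' hker
  let L0 : LinearMap.range T →ₗ[ℝ] E n := q ∘ₗ (T.quotKerEquivRange.symm : _ →ₗ[ℝ] _)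
  have hL0 : ∀ p : ℝ × ℝ, L0 ⟨T p, LinearMap.mem_range_self T p⟩ = T' p := by
    intro p
    show q (T.quotKerEquivRange.symm ⟨T p, _⟩) = T' p
    rw [LinearMap.quotKerEquivRange_symm_apply_image]
    simp [q]
  have hL0norm : ∀ z : LinearMap.range T, ‖L0 z‖ = ‖z‖ := by
    rintro ⟨z, hz⟩
    obtain ⟨p, rfl⟩ := hz
    rw [hL0 p]
    simpa using (hnorm p).symm
  let L : (LinearMap.range T) →ₗᵢ[ℝ] E n := ⟨L0, hL0norm⟩
  let A : E n ≃ₗᵢ[ℝ] E n := L.extend.toLinearIsometryEquiv rfl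
  have hA : ∀ p : ℝ × ℝ, A (T p) = T' p := by
    intro p
    show L.extend (T p) = T' p
    exact (L.extend_apply ⟨T p, LinearMap.mem_range_self T p⟩).trans (hL0 p)
  refine ⟨A, ?_, ?_⟩
  · have := hA (1, 0); simpa [hT, hT'] using this
  · have := hA (0, 1); simpa [hT, hT'] using this

/-- A Finsler metric `F` on an `O(n)`-invariant convex domain `Ω ⊆ ℝⁿ` (`n ≥ 2`) is
spherically symmetric, i.e. invariant under every linear isometry of `ℝⁿ`, if and only if
`F(x,y) = φ(‖x‖, ‖y‖, ⟨x,y⟩)` for some positive function `φ` of three real variables. -/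
theorem spherically_symmetric_iff_phi_form {n : ℕ} (hn : 2 ≤ n)
    (Ω : Set (E n)) (hopen : IsOpen Ω) (hconv : Convex ℝ Ω)
    (hinv : ∀ A : E n ≃ₗᵢ[ℝ] E n, ∀ x ∈ Ω, A x ∈ Ω)
    (F : E n → E n → ℝ) (hF : IsFinslerMetric Ω F) :
    (∀ A : E n ≃ₗᵢ[ℝ] E n, ∀ x ∈ Ω, ∀ y : E n, F (A x) (A y) = F x y) ↔
      ∃ φ : ℝ → ℝ → ℝ → ℝ, ∀ x ∈ Ω, ∀ y : E n, y ≠ 0 →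
        0 < φ ‖x‖ ‖y‖ ⟪x, y⟫ ∧ F x y = φ ‖x‖ ‖y‖ ⟪x, y⟫ := by
  classical
  obtain ⟨-, hpos, hhom, -⟩ := hF
  constructor
  · intro hsym
    set P : ℝ → ℝ → ℝ → (E n × E n) → Prop := fun r u v p =>
      p.1 ∈ Ω ∧ p.2 ≠ 0 ∧ ‖p.1‖ = r ∧ ‖p.2‖ = u ∧ ⟪p.1, p.2⟫ = v with hP
    refine ⟨fun r u v => if h : ∃ p, P r u v p then F h.choose.1 h.choose.2 else 1, ?_⟩
    intro x hx y hy
    have hex : ∃ p, P ‖x‖ ‖y‖ ⟪x, y⟫ p := ⟨(x, y), hx, hy, rfl, rfl, rfl⟩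
    obtain ⟨hx0, hy0, hr, hu, hv⟩ := hex.choose_spec
    obtain ⟨A, hAx, hAy⟩ := exists_isometry_of_gram_eq hex.choose.1 hex.choose.2 x y
      (by rw [hr]) (by rw [hu]) (by rw [hv])
    have hFeq : F x y = F hex.choose.1 hex.choose.2 := by
      have h := hsym A hex.choose.1 hx0 hex.choose.2
      rw [hAx, hAy] at h
      exact h
    simp only [dif_pos hex]
    exact ⟨hFeq ▸ (hpos x hx y hy), hFeq⟩
  · rintro ⟨φ, hφ⟩ A x hx y
    have hF0 : ∀ z ∈ Ω, F z 0 = 0 := by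
      intro z hz
      have := hhom z hz 0 2 (by norm_num)
      rw [smul_zero] at this
      linarith
    rcases eq_or_ne y 0 with rfl | hy
    · rw [map_zero, hF0 _ (hinv A x hx), hF0 _ hx]
    · have h1 := hφ x hx y hy
      have h2 := hφ (A x) (hinv A x hx) (A y) (by simpa using hy)
      rw [h2.2, h1.2, A.norm_map, A.norm_map, A.inner_map_map]
end
end

section
/- Let φ(r,u,v) be a smooth positive function, positively homogeneous of degree one in (u,v), and set F(x,y) = φ(‖x‖, ‖y‖, ⟨x,y⟩) for x, y ∈ ℝⁿ with y ≠ 0. Then the determinant of the fundamental tensor (g_ij) = (½ ∂²(F²)/∂yⁱ∂yʲ) satisfies det(g_ij) = (φ/u)^{n+1} · φ_u^{n−2} · [φ_u + (‖x‖²‖y‖² − ⟨x,y⟩²) · φ_vv/u], where r = ‖x‖, u = ‖y‖, v = ⟨x,y⟩ and subscripts denote partial derivatives of φ. -/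
open scoped RealInnerProductSpace BigOperators

noncomputable section

/-- Partial derivative of `φ(r,u,v)` in `u`. -/
def Du (φ : ℝ → ℝ → ℝ → ℝ) : ℝ → ℝ → ℝ → ℝ := fun r u v => deriv (fun s => φ r s v) u

/-- Partial derivative of `φ(r,u,v)` in `v`. -/
def Dv (φ : ℝ → ℝ → ℝ → ℝ) : ℝ → ℝ → ℝ → ℝ := fun r u v => deriv (fun s => φ r u s) v

/-- first partial of a function on ℝ². -/
def Pu (Φ : ℝ × ℝ → ℝ) : ℝ × ℝ → ℝ := fun w => fderiv ℝ Φ w (1, 0)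
def Pv (Φ : ℝ × ℝ → ℝ) : ℝ × ℝ → ℝ := fun w => fderiv ℝ Φ w (0, 1)

lemma clm_decomp (L : ℝ × ℝ →L[ℝ] ℝ) (a b : ℝ) : L (a, b) = a * L (1, 0) + b * L (0, 1) := by
  have : (a, b) = a • ((1:ℝ), (0:ℝ)) + b • ((0:ℝ), (1:ℝ)) := by simp [Prod.ext_iff]
  rw [this, map_add, map_smul, map_smul, smul_eq_mul, smul_eq_mul]

lemma hasDerivAt_slice_u {G : ℝ × ℝ → ℝ} {q : ℝ × ℝ} (h : DifferentiableAt ℝ G q) :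
    HasDerivAt (fun s => G (s, q.2)) (Pu G q) q.1 := by
  have hc : HasDerivAt (fun s : ℝ => (s, q.2)) ((1:ℝ), (0:ℝ)) q.1 :=
    (hasDerivAt_id q.1).prodMk (hasDerivAt_const _ _)
  have := h.hasFDerivAt.comp_hasDerivAt q.1 (by simpa using hc)
  simpa [Pu, Function.comp_def] using this

lemma hasDerivAt_slice_v {G : ℝ × ℝ → ℝ} {q : ℝ × ℝ} (h : DifferentiableAt ℝ G q) :
    HasDerivAt (fun s => G (q.1, s)) (Pv G q) q.2 := by
  have hc : HasDerivAt (fun s : ℝ => (q.1, s)) ((0:ℝ), (1:ℝ)) q.2 :=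
    (hasDerivAt_const _ _).prodMk (hasDerivAt_id q.2)
  have := h.hasFDerivAt.comp_hasDerivAt q.2 (by simpa using hc)
  simpa [Pv, Function.comp_def] using this

lemma hasDerivAt_norm_line {n : ℕ} (b e : E n) (hb : b ≠ 0) :
    HasDerivAt (fun t : ℝ => ‖b + t • e‖) (⟪b, e⟫ / ‖b‖) 0 := by
  have hb' : (0:ℝ) < ‖b‖ := norm_pos_iff.2 hb
  have key : ∀ t : ℝ, ‖b + t • e‖ = Real.sqrt (‖b‖ ^ 2 + (2 * ⟪b, e⟫) * t + ‖e‖ ^ 2 * t ^ 2) := by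
    intro t
    have : ⟪b + t • e, b + t • e⟫ = ‖b‖ ^ 2 + (2 * ⟪b, e⟫) * t + ‖e‖ ^ 2 * t ^ 2 := by
      rw [real_inner_add_add_self, real_inner_smul_right, real_inner_smul_left,
        real_inner_smul_right, real_inner_self_eq_norm_sq, real_inner_self_eq_norm_sq]
      ring
    rw [← this, real_inner_self_eq_norm_sq, Real.sqrt_sq (norm_nonneg _)]
  have h1 : HasDerivAt (fun t : ℝ => ‖b‖ ^ 2 + (2 * ⟪b, e⟫) * t + ‖e‖ ^ 2 * t ^ 2)
      (2 * ⟪b, e⟫) 0 := by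
    have := ((hasDerivAt_id (0:ℝ)).const_mul (2 * ⟪b, e⟫)).const_add (‖b‖ ^ 2)
    have h2 := ((hasDerivAt_pow 2 (0:ℝ)).const_mul (‖e‖ ^ 2))
    simpa [Pi.add_def] using this.add h2
  have h3 := h1.sqrt (by simpa using pow_ne_zero 2 (norm_ne_zero_iff.2 hb))
  have h4 : HasDerivAt (fun t : ℝ => ‖b + t • e‖)
      (2 * ⟪b, e⟫ / (2 * Real.sqrt (‖b‖ ^ 2 + 2 * ⟪b, e⟫ * 0 + ‖e‖ ^ 2 * 0 ^ 2))) 0 := by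
    refine HasDerivAt.congr_of_eventuallyEq h3 ?_
    filter_upwards with t using (key t)
  have : Real.sqrt (‖b‖ ^ 2 + 2 * ⟪b, e⟫ * 0 + ‖e‖ ^ 2 * 0 ^ 2) = ‖b‖ := by
    simp [Real.sqrt_sq (norm_nonneg b)]
  rw [this] at h4
  have : 2 * ⟪b, e⟫ / (2 * ‖b‖) = ⟪b, e⟫ / ‖b‖ := by
    rw [mul_div_mul_left _ _ (by norm_num : (2:ℝ) ≠ 0)]
  rwa [this] at h4

lemma hasDerivAt_inner_line {n : ℕ} (x b e : E n) :
    HasDerivAt (fun t : ℝ => ⟪x, b + t • e⟫) ⟪x, e⟫ 0 := by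
  have key : ∀ t : ℝ, ⟪x, b + t • e⟫ = ⟪x, b⟫ + ⟪x, e⟫ * t := by
    intro t; rw [inner_add_right, real_inner_smul_right]; ring
  have h1 : HasDerivAt (fun t : ℝ => ⟪x, b⟫ + ⟪x, e⟫ * t) ⟪x, e⟫ 0 := by
    simpa using ((hasDerivAt_id (0:ℝ)).const_mul ⟪x, e⟫).const_add ⟪x, b⟫
  exact h1.congr_of_eventuallyEq (by filter_upwards with t using (key t))


lemma sum_comb {n : ℕ} (c1 c2 : ℝ) (f g h : Fin n → ℝ) :
    ∑ j, (c1 * f j + c2 * g j) * h j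
      = c1 * (∑ j, f j * h j) + c2 * (∑ j, g j * h j) := by
  rw [Finset.mul_sum, Finset.mul_sum, ← Finset.sum_add_distrib]
  exact Finset.sum_congr rfl fun j _ => by ring

lemma det_rank_two_aux {n : ℕ} (hn : 2 ≤ n) (p q0 q1 q2 saa sab sbb : ℝ) (hp : p ≠ 0)
    (a b : Fin n → ℝ) (hsaa : ∑ i, a i * a i = saa) (hsab : ∑ i, a i * b i = sab)
    (hsbb : ∑ i, b i * b i = sbb) :
    (Matrix.of fun i j => p * (if i = j then 1 else 0) + q0 * (a i * a j)
        + q1 * (a i * b j + b i * a j) + q2 * (b i * b j)).det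
      = p ^ (n - 2) * (p ^ 2 + p * (q0 * saa + 2 * q1 * sab + q2 * sbb)
          + (q0 * q2 - q1 ^ 2) * (saa * sbb - sab ^ 2)) := by
  set U : Matrix (Fin n) (Fin 2) ℝ := Matrix.of fun i k => if k = 0 then a i else b i with hU
  set V : Matrix (Fin 2) (Fin n) ℝ :=
    Matrix.of fun k j => if k = 0 then q0 * a j + q1 * b j else q1 * a j + q2 * b j with hV
  have hM : (Matrix.of fun i j => p * (if i = j then 1 else 0) + q0 * (a i * a j)
        + q1 * (a i * b j + b i * a j) + q2 * (b i * b j))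
      = p • (1 : Matrix (Fin n) (Fin n) ℝ) + U * V := by
    ext i j
    simp [Matrix.mul_apply, Matrix.one_apply, Fin.sum_univ_two, hU, hV]
    by_cases h : i = j <;> simp [h] <;> ring
  have hVU : V * U = Matrix.of
      (fun k l : Fin 2 => if k = 0 then (if l = 0 then q0 * saa + q1 * sab else q0 * sab + q1 * sbb)
        else (if l = 0 then q1 * saa + q2 * sab else q1 * sab + q2 * sbb)) := by
    have hsba : ∑ i, b i * a i = sab := by
      rw [← hsab]; exact Finset.sum_congr rfl fun i _ => mul_comm _ _
    ext k l
    fin_cases k <;> fin_cases l <;>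
      simp [Matrix.mul_apply, hU, hV, sum_comb, hsaa, hsab, hsbb, hsba]
  have key : p • (1 : Matrix (Fin n) (Fin n) ℝ) + U * V = p • (1 + (p⁻¹ • U) * V) := by
    rw [smul_add, Matrix.smul_mul, smul_smul, mul_inv_cancel₀ hp, one_smul]
  rw [hM, key, Matrix.det_smul, Matrix.det_one_add_mul_comm, Matrix.mul_smul, hVU]
  rw [Matrix.det_fin_two]
  simp only [Matrix.add_apply, Matrix.smul_apply, Matrix.one_apply, Matrix.of_apply]
  norm_num
  have hpow : p ^ n = p ^ (n - 2) * p ^ 2 := by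
    rw [← pow_add]; congr 1; omega
  rw [hpow]
  field_simp
  ring

lemma det_rank_two {n : ℕ} (hn : 2 ≤ n) (p q0 q1 q2 saa sab sbb : ℝ)
    (a b : Fin n → ℝ) (hsaa : ∑ i, a i * a i = saa) (hsab : ∑ i, a i * b i = sab)
    (hsbb : ∑ i, b i * b i = sbb) :
    (Matrix.of fun i j => p * (if i = j then 1 else 0) + q0 * (a i * a j)
        + q1 * (a i * b j + b i * a j) + q2 * (b i * b j)).det
      = p ^ (n - 2) * (p ^ 2 + p * (q0 * saa + 2 * q1 * sab + q2 * sbb)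
          + (q0 * q2 - q1 ^ 2) * (saa * sbb - sab ^ 2)) := by
  have cont1 : Continuous fun t : ℝ => (Matrix.of fun i j => t * (if i = j then 1 else 0)
      + q0 * (a i * a j) + q1 * (a i * b j + b i * a j) + q2 * (b i * b j)).det := by
    apply Continuous.matrix_det
    apply continuous_matrix
    intro i j
    show Continuous fun t : ℝ => t * (if i = j then 1 else 0)
      + q0 * (a i * a j) + q1 * (a i * b j + b i * a j) + q2 * (b i * b j)
    fun_prop
  have cont2 : Continuous fun t : ℝ => t ^ (n - 2) * (t ^ 2
      + t * (q0 * saa + 2 * q1 * sab + q2 * sbb)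
      + (q0 * q2 - q1 ^ 2) * (saa * sbb - sab ^ 2)) := by fun_prop
  have heq := Continuous.ext_on (dense_compl_singleton (0:ℝ)) cont1 cont2 ?_
  · exact congrFun heq p
  · intro t ht
    exact det_rank_two_aux hn t q0 q1 q2 saa sab sbb
      (Set.mem_compl_singleton_iff.1 ht) a b hsaa hsab hsbb


lemma clm_decomp' (L : ℝ × ℝ →L[ℝ] ℝ) (q : ℝ × ℝ) :
    L q = q.1 * L (1, 0) + q.2 * L (0, 1) := by
  have h : q = q.1 • ((1:ℝ), (0:ℝ)) + q.2 • ((0:ℝ), (1:ℝ)) := by simp [Prod.ext_iff]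
  rw [h, map_add, map_smul, map_smul, smul_eq_mul, smul_eq_mul]
  simp [Prod.ext_iff]

lemma fderiv_along (G : ℝ × ℝ → ℝ) (q : ℝ × ℝ) (hd : DifferentiableAt ℝ G q) :
    HasDerivAt (fun c : ℝ => G (c • q)) (fderiv ℝ G q q) 1 := by
  have hc : HasDerivAt (fun c : ℝ => c • q) q 1 := by
    simpa using (hasDerivAt_id (1:ℝ)).smul_const q
  have hF : HasFDerivAt G (fderiv ℝ G q) ((1:ℝ) • q) := by
    rw [one_smul]; exact hd.hasFDerivAt
  exact hF.comp_hasDerivAt 1 hc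

section Phi
variable {Φ : ℝ × ℝ → ℝ}
  (hsm : ∀ q : ℝ × ℝ, 0 < q.1 → ContDiffAt ℝ (⊤ : ℕ∞) Φ q)
  (hom : ∀ u v c : ℝ, 0 < c → Φ (c * u, c * v) = c * Φ (u, v))

include hsm in
lemma diffPhi (q : ℝ × ℝ) (hq : 0 < q.1) : DifferentiableAt ℝ Φ q :=
  (hsm q hq).differentiableAt (by simp)

include hsm in
lemma contPu (q : ℝ × ℝ) (hq : 0 < q.1) : ContDiffAt ℝ (⊤ : ℕ∞) (Pu Φ) q :=
  ((hsm q hq).fderiv_right (by simp)).clm_apply contDiffAt_const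

include hsm in
lemma contPv (q : ℝ × ℝ) (hq : 0 < q.1) : ContDiffAt ℝ (⊤ : ℕ∞) (Pv Φ) q :=
  ((hsm q hq).fderiv_right (by simp)).clm_apply contDiffAt_const

include hsm hom in
lemma euler (q : ℝ × ℝ) (hq : 0 < q.1) :
    q.1 * Pu Φ q + q.2 * Pv Φ q = Φ q := by
  have h1 := fderiv_along Φ q (diffPhi hsm q hq)
  have h2 : (fun c : ℝ => c * Φ q) =ᶠ[nhds (1:ℝ)] fun c => Φ (c • q) := by
    filter_upwards [eventually_gt_nhds zero_lt_one] with c hc0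
    have : c • q = (c * q.1, c * q.2) := rfl
    rw [this, hom q.1 q.2 c hc0, Prod.mk.eta]
  have h3 : HasDerivAt (fun c : ℝ => c * Φ q) (fderiv ℝ Φ q q) 1 :=
    h1.congr_of_eventuallyEq h2
  have h4 : HasDerivAt (fun c : ℝ => c * Φ q) (Φ q) 1 := by
    simpa using (hasDerivAt_id (1:ℝ)).mul_const (Φ q)
  have h5 := h4.unique h3
  show q.1 * (fderiv ℝ Φ q) (1, 0) + q.2 * (fderiv ℝ Φ q) (0, 1) = Φ q
  rw [← clm_decomp']
  exact h5.symm

include hsm hom in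
lemma pv_scale (q : ℝ × ℝ) (hq : 0 < q.1) (c : ℝ) (hc : 0 < c) :
    Pv Φ (c • q) = Pv Φ q := by
  have hc' : c ≠ 0 := ne_of_gt hc
  have hq' : 0 < (c • q).1 := by
    have : (c • q).1 = c * q.1 := rfl
    rw [this]; positivity
  have h1 : HasDerivAt (fun s => Φ ((c • q).1, s)) (Pv Φ (c • q)) (c • q).2 :=
    hasDerivAt_slice_v (diffPhi hsm _ hq')
  have key : ∀ s : ℝ, Φ ((c • q).1, s) = c * Φ (q.1, c⁻¹ * s) := by
    intro s
    have h := hom q.1 (c⁻¹ * s) c hc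
    rw [mul_inv_cancel_left₀ hc'] at h
    exact h
  have hinner : HasDerivAt (fun s : ℝ => c⁻¹ * s) c⁻¹ ((c • q).2) := by
    simpa using (hasDerivAt_id ((c • q).2)).const_mul c⁻¹
  have hsl : HasDerivAt (fun s => Φ (q.1, s)) (Pv Φ q) (c⁻¹ * (c • q).2) := by
    have : c⁻¹ * (c • q).2 = q.2 := by
      have : (c • q).2 = c * q.2 := rfl
      rw [this, inv_mul_cancel_left₀ hc']
    rw [this]
    exact hasDerivAt_slice_v (diffPhi hsm q hq)
  have h2 : HasDerivAt (fun s : ℝ => c * Φ (q.1, c⁻¹ * s)) (c * (Pv Φ q * c⁻¹)) ((c • q).2) :=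
    (hsl.comp _ hinner).const_mul c
  have h2' : HasDerivAt (fun s => Φ ((c • q).1, s)) (c * (Pv Φ q * c⁻¹)) ((c • q).2) := by
    refine h2.congr_of_eventuallyEq ?_
    filter_upwards with s using (key s)
  have := h1.unique h2'
  rw [this]; field_simp

include hsm hom in
lemma rel_vu (q : ℝ × ℝ) (hq : 0 < q.1) :
    q.1 * Pu (Pv Φ) q + q.2 * Pv (Pv Φ) q = 0 := by
  have hd : DifferentiableAt ℝ (Pv Φ) q := (contPv hsm q hq).differentiableAt (by simp)
  have h1 := fderiv_along (Pv Φ) q hd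
  have h2 : (fun _ : ℝ => Pv Φ q) =ᶠ[nhds (1:ℝ)] fun c => Pv Φ (c • q) := by
    filter_upwards [eventually_gt_nhds zero_lt_one] with c hc0
    exact (pv_scale hsm hom q hq c hc0).symm
  have h3 : HasDerivAt (fun _ : ℝ => Pv Φ q) (fderiv ℝ (Pv Φ) q q) 1 :=
    h1.congr_of_eventuallyEq h2
  have h4 := (hasDerivAt_const (1:ℝ) (Pv Φ q)).unique h3
  show q.1 * (fderiv ℝ (Pv Φ) q) (1, 0) + q.2 * (fderiv ℝ (Pv Φ) q) (0, 1) = 0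
  rw [← clm_decomp']
  exact h4.symm

include hsm hom in
lemma rel_uv (q : ℝ × ℝ) (hq : 0 < q.1) :
    q.1 * Pv (Pu Φ) q + q.2 * Pv (Pv Φ) q = 0 := by
  have hdu : DifferentiableAt ℝ (Pu Φ) q := (contPu hsm q hq).differentiableAt (by simp)
  have hdv : DifferentiableAt ℝ (Pv Φ) q := (contPv hsm q hq).differentiableAt (by simp)
  have hPu := hasDerivAt_slice_v (G := Pu Φ) hdu
  have hPv := hasDerivAt_slice_v (G := Pv Φ) hdv
  have hPhi := hasDerivAt_slice_v (G := Φ) (diffPhi hsm q hq)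
  have hL : HasDerivAt (fun s => q.1 * Pu Φ (q.1, s) + s * Pv Φ (q.1, s))
      (q.1 * Pv (Pu Φ) q + (1 * Pv Φ (q.1, q.2) + q.2 * Pv (Pv Φ) q)) q.2 :=
    (hPu.const_mul q.1).add ((hasDerivAt_id q.2).mul hPv)
  have heq : (fun s => q.1 * Pu Φ (q.1, s) + s * Pv Φ (q.1, s)) = fun s => Φ (q.1, s) := by
    funext s
    exact euler hsm hom (q.1, s) hq
  rw [heq] at hL
  have := hL.unique hPhi
  rw [Prod.mk.eta] at this
  linarith [this]

include hsm hom in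
lemma rel_uu (q : ℝ × ℝ) (hq : 0 < q.1) :
    q.1 * Pu (Pu Φ) q + q.2 * Pu (Pv Φ) q = 0 := by
  have hdu : DifferentiableAt ℝ (Pu Φ) q := (contPu hsm q hq).differentiableAt (by simp)
  have hdv : DifferentiableAt ℝ (Pv Φ) q := (contPv hsm q hq).differentiableAt (by simp)
  have hPu := hasDerivAt_slice_u (G := Pu Φ) hdu
  have hPv := hasDerivAt_slice_u (G := Pv Φ) hdv
  have hPhi := hasDerivAt_slice_u (G := Φ) (diffPhi hsm q hq)
  have hL : HasDerivAt (fun s => s * Pu Φ (s, q.2) + q.2 * Pv Φ (s, q.2))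
      ((1 * Pu Φ (q.1, q.2) + q.1 * Pu (Pu Φ) q) + q.2 * Pu (Pv Φ) q) q.1 :=
    ((hasDerivAt_id q.1).mul hPu).add (hPv.const_mul q.2)
  have hL' : HasDerivAt (fun s => Φ (s, q.2))
      ((1 * Pu Φ (q.1, q.2) + q.1 * Pu (Pu Φ) q) + q.2 * Pu (Pv Φ) q) q.1 := by
    refine hL.congr_of_eventuallyEq ?_
    filter_upwards [eventually_gt_nhds hq] with s hs
    exact (euler hsm hom (s, q.2) hs).symm
  have := hL'.unique hPhi
  rw [Prod.mk.eta] at this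
  linarith [this]

include hsm in
lemma inner_deriv {n : ℕ} (x b : E n) (hb : b ≠ 0) (i : Fin n) :
    deriv (fun t : ℝ => (Φ (‖b + t • EuclideanSpace.single i (1:ℝ)‖,
        ⟪x, b + t • EuclideanSpace.single i (1:ℝ)⟫)) ^ 2) 0
      = 2 * Φ (‖b‖, ⟪x, b⟫) * (Pu Φ (‖b‖, ⟪x, b⟫) * (b i * (‖b‖)⁻¹)
          + Pv Φ (‖b‖, ⟪x, b⟫) * x i) := by
  set e := EuclideanSpace.single i (1:ℝ) with he
  have hb0 : (0:ℝ) < ‖b‖ := norm_pos_iff.2 hb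
  have hcur : HasDerivAt (fun t : ℝ => ((‖b + t • e‖, ⟪x, b + t • e⟫) : ℝ × ℝ))
      ((⟪b, e⟫ / ‖b‖, ⟪x, e⟫) : ℝ × ℝ) 0 :=
    (hasDerivAt_norm_line b e hb).prodMk (hasDerivAt_inner_line x b e)
  have h0 : ((‖b + (0:ℝ) • e‖, ⟪x, b + (0:ℝ) • e⟫) : ℝ × ℝ) = (‖b‖, ⟪x, b⟫) := by simp
  have hF : HasFDerivAt Φ (fderiv ℝ Φ ((‖b‖, ⟪x, b⟫) : ℝ × ℝ))
      ((‖b + (0:ℝ) • e‖, ⟪x, b + (0:ℝ) • e⟫) : ℝ × ℝ) := by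
    rw [h0]
    exact (diffPhi hsm _ (by exact hb0)).hasFDerivAt
  have hΦc : HasDerivAt (fun t : ℝ => Φ (‖b + t • e‖, ⟪x, b + t • e⟫))
      (fderiv ℝ Φ ((‖b‖, ⟪x, b⟫) : ℝ × ℝ) ((⟪b, e⟫ / ‖b‖, ⟪x, e⟫) : ℝ × ℝ)) 0 :=
    hF.comp_hasDerivAt 0 hcur
  have hsq := hΦc.pow 2
  rw [show (fun t : ℝ => (Φ (‖b + t • e‖, ⟪x, b + t • e⟫)) ^ 2) = (fun t : ℝ => Φ (‖b + t • e‖, ⟪x, b + t • e⟫)) ^ 2 from rfl, hsq.deriv]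
  rw [clm_decomp']
  have hbe : ⟪b, e⟫ = b i := by
    rw [he]; simp [EuclideanSpace.inner_single_right]
  have hxe : ⟪x, e⟫ = x i := by
    rw [he]; simp [EuclideanSpace.inner_single_right]
  simp only [h0, hbe, hxe]
  show (2:ℝ) * Φ (‖b‖, ⟪x,b⟫) ^ (2-1) * (b i / ‖b‖ * Pu Φ (‖b‖, ⟪x,b⟫) + x i * Pv Φ (‖b‖, ⟪x,b⟫)) = _
  rw [pow_one, div_eq_mul_inv]
  ring


set_option maxHeartbeats 1600000 in
include hsm hom in
lemma gF_entry {n : ℕ} (x y : E n) (hy : y ≠ 0) (i j : Fin n) :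
    (1/2 : ℝ) * deriv (fun s : ℝ => deriv (fun t : ℝ =>
        (Φ (‖y + s • EuclideanSpace.single j (1:ℝ) + t • EuclideanSpace.single i (1:ℝ)‖,
          ⟪x, y + s • EuclideanSpace.single j (1:ℝ) + t • EuclideanSpace.single i (1:ℝ)⟫)) ^ 2) 0) 0
      = Φ (‖y‖, ⟪x, y⟫) * Pu Φ (‖y‖, ⟪x, y⟫) / ‖y‖ * (if i = j then 1 else 0)
        + ((Pv Φ (‖y‖, ⟪x, y⟫)) ^ 2 + Φ (‖y‖, ⟪x, y⟫) * Pv (Pv Φ) (‖y‖, ⟪x, y⟫)) * (x i * x j)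
        + (Pu Φ (‖y‖, ⟪x, y⟫) * Pv Φ (‖y‖, ⟪x, y⟫) / ‖y‖
            - Φ (‖y‖, ⟪x, y⟫) * ⟪x, y⟫ * Pv (Pv Φ) (‖y‖, ⟪x, y⟫) / ‖y‖ ^ 2)
          * (x i * y j + y i * x j)
        + ((Pu Φ (‖y‖, ⟪x, y⟫)) ^ 2 / ‖y‖ ^ 2
            + Φ (‖y‖, ⟪x, y⟫) * ⟪x, y⟫ ^ 2 * Pv (Pv Φ) (‖y‖, ⟪x, y⟫) / ‖y‖ ^ 4
            - Φ (‖y‖, ⟪x, y⟫) * Pu Φ (‖y‖, ⟪x, y⟫) / ‖y‖ ^ 3) * (y i * y j) := by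
  set ej := EuclideanSpace.single j (1:ℝ) with hej
  have u0 : (0:ℝ) < ‖y‖ := norm_pos_iff.2 hy
  have hbne : ∀ᶠ s in nhds (0:ℝ), y + s • ej ≠ 0 := by
    have hcont : Continuous fun s : ℝ => y + s • ej := by continuity
    have h1 : {z : E n | z ≠ 0} ∈ nhds (y + (0:ℝ) • ej) := by
      rw [show y + (0:ℝ) • ej = y by simp]
      exact isOpen_ne.mem_nhds hy
    exact hcont.continuousAt.eventually_mem h1
  set δ : ℝ := ej i with hδ
  have hnorm := hasDerivAt_norm_line y ej hy
  have hinnr := hasDerivAt_inner_line x y ej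
  have hcur : HasDerivAt (fun s : ℝ => ((‖y + s • ej‖, ⟪x, y + s • ej⟫) : ℝ × ℝ))
      ((⟪y, ej⟫ / ‖y‖, ⟪x, ej⟫) : ℝ × ℝ) 0 := hnorm.prodMk hinnr
  have h0 : ((‖y + (0:ℝ) • ej‖, ⟪x, y + (0:ℝ) • ej⟫) : ℝ × ℝ) = ((‖y‖, ⟪x, y⟫) : ℝ × ℝ) := by
    simp
  have hcomp : ∀ G : ℝ × ℝ → ℝ, DifferentiableAt ℝ G ((‖y‖, ⟪x, y⟫) : ℝ × ℝ) →
      HasDerivAt (fun s : ℝ => G (‖y + s • ej‖, ⟪x, y + s • ej⟫))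
        (⟪y, ej⟫ / ‖y‖ * Pu G (‖y‖, ⟪x, y⟫) + ⟪x, ej⟫ * Pv G (‖y‖, ⟪x, y⟫)) 0 := by
    intro G hG
    have hF : HasFDerivAt G (fderiv ℝ G ((‖y‖, ⟪x, y⟫) : ℝ × ℝ))
        ((‖y + (0:ℝ) • ej‖, ⟪x, y + (0:ℝ) • ej⟫) : ℝ × ℝ) := by
      rw [h0]; exact hG.hasFDerivAt
    have h2 := hF.comp_hasDerivAt 0 hcur
    rw [clm_decomp'] at h2
    simpa [Function.comp_def, Pu, Pv] using h2
  have hq1 : (0:ℝ) < ((‖y‖, ⟪x, y⟫) : ℝ × ℝ).1 := u0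
  have hA := hcomp Φ (diffPhi hsm _ hq1)
  have hB := hcomp (Pu Φ) ((contPu hsm _ hq1).differentiableAt (by simp))
  have hC := hcomp (Pv Φ) ((contPv hsm _ hq1).differentiableAt (by simp))
  have hlin : HasDerivAt (fun s : ℝ => y i + s * δ) δ 0 := by
    simpa using ((hasDerivAt_id (0:ℝ)).mul_const δ).const_add (y i)
  have hn0 : ‖y + (0:ℝ) • ej‖ ≠ 0 := by
    simpa using (norm_ne_zero_iff.2 hy)
  have hinv := hnorm.inv hn0
  have hpart1 := hB.mul (hlin.mul hinv)
  have hpart2 := hC.mul_const (x i)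
  have hder := (hA.const_mul 2).mul (hpart1.add hpart2)
  have hev : (fun s : ℝ => deriv (fun t : ℝ =>
      (Φ (‖y + s • ej + t • EuclideanSpace.single i (1:ℝ)‖,
        ⟪x, y + s • ej + t • EuclideanSpace.single i (1:ℝ)⟫)) ^ 2) 0)
      =ᶠ[nhds (0:ℝ)] (fun s : ℝ => 2 * Φ (‖y + s • ej‖, ⟪x, y + s • ej⟫)
        * (Pu Φ (‖y + s • ej‖, ⟪x, y + s • ej⟫) * ((y i + s * δ) * (‖y + s • ej‖)⁻¹)
          + Pv Φ (‖y + s • ej‖, ⟪x, y + s • ej⟫) * x i)) := by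
    filter_upwards [hbne] with s hs
    rw [inner_deriv hsm x (y + s • ej) hs i]
    have happ : (y + s • ej) i = y i + s * δ := by
      rw [hδ]
      simp [PiLp.add_apply, PiLp.smul_apply, smul_eq_mul]
    rw [happ]
  have houter := hder.congr_of_eventuallyEq hev
  rw [houter.deriv]
  -- clean up the value
  have hyej : ⟪y, ej⟫ = y j := by rw [hej]; simp [EuclideanSpace.inner_single_right]
  have hxej : ⟪x, ej⟫ = x j := by rw [hej]; simp [EuclideanSpace.inner_single_right]
  have hδval : δ = if i = j then 1 else 0 := by
    rw [hδ, hej]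
    simp [EuclideanSpace.single_apply, eq_comm]
  have hu : ‖y‖ ≠ 0 := ne_of_gt u0
  have hPvPu : Pv (Pu Φ) ((‖y‖, ⟪x, y⟫) : ℝ × ℝ)
      = -(⟪x, y⟫ * Pv (Pv Φ) ((‖y‖, ⟪x, y⟫) : ℝ × ℝ)) / ‖y‖ := by
    have h : ‖y‖ * Pv (Pu Φ) ((‖y‖, ⟪x, y⟫) : ℝ × ℝ)
        + ⟪x, y⟫ * Pv (Pv Φ) ((‖y‖, ⟪x, y⟫) : ℝ × ℝ) = 0 :=
      rel_uv hsm hom ((‖y‖, ⟪x, y⟫) : ℝ × ℝ) hq1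
    rw [eq_div_iff hu]
    linarith
  have hPuPv : Pu (Pv Φ) ((‖y‖, ⟪x, y⟫) : ℝ × ℝ)
      = -(⟪x, y⟫ * Pv (Pv Φ) ((‖y‖, ⟪x, y⟫) : ℝ × ℝ)) / ‖y‖ := by
    have h : ‖y‖ * Pu (Pv Φ) ((‖y‖, ⟪x, y⟫) : ℝ × ℝ)
        + ⟪x, y⟫ * Pv (Pv Φ) ((‖y‖, ⟪x, y⟫) : ℝ × ℝ) = 0 :=
      rel_vu hsm hom ((‖y‖, ⟪x, y⟫) : ℝ × ℝ) hq1
    rw [eq_div_iff hu]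
    linarith
  have hPuPu : Pu (Pu Φ) ((‖y‖, ⟪x, y⟫) : ℝ × ℝ)
      = ⟪x, y⟫ ^ 2 * Pv (Pv Φ) ((‖y‖, ⟪x, y⟫) : ℝ × ℝ) / ‖y‖ ^ 2 := by
    have h : ‖y‖ * Pu (Pu Φ) ((‖y‖, ⟪x, y⟫) : ℝ × ℝ)
        + ⟪x, y⟫ * Pu (Pv Φ) ((‖y‖, ⟪x, y⟫) : ℝ × ℝ) = 0 :=
      rel_uu hsm hom ((‖y‖, ⟪x, y⟫) : ℝ × ℝ) hq1
    have h2 : ‖y‖ * Pu (Pv Φ) ((‖y‖, ⟪x, y⟫) : ℝ × ℝ)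
        + ⟪x, y⟫ * Pv (Pv Φ) ((‖y‖, ⟪x, y⟫) : ℝ × ℝ) = 0 :=
      rel_vu hsm hom ((‖y‖, ⟪x, y⟫) : ℝ × ℝ) hq1
    rw [eq_div_iff (pow_ne_zero 2 hu)]
    linear_combination ‖y‖ * h - ⟪x, y⟫ * h2
  simp only [h0, hyej, hxej, hδval, zero_smul, add_zero, zero_mul, mul_zero, Pi.mul_apply,
    Pi.add_apply, Pi.inv_apply]
  rw [hPvPu, hPuPv, hPuPu]
  set A := Φ ((‖y‖, ⟪x, y⟫) : ℝ × ℝ) with hAd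
  set B := Pu Φ ((‖y‖, ⟪x, y⟫) : ℝ × ℝ) with hBd
  set C := Pv Φ ((‖y‖, ⟪x, y⟫) : ℝ × ℝ) with hCd
  set W := Pv (Pv Φ) ((‖y‖, ⟪x, y⟫) : ℝ × ℝ) with hWd
  by_cases hij : i = j
  · rw [if_pos hij]
    field_simp
    ring
  · rw [if_neg hij]
    field_simp
    ring

end Phi

set_option maxHeartbeats 1600000 in
/-- For `F(x,y) = φ(‖x‖,‖y‖,⟨x,y⟩)` with `φ` smooth, positive and positively
1-homogeneous in `(u,v)`, the determinant of the fundamental tensor is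
`(φ/u)^{n+1} φ_u^{n-2} [φ_u + (‖x‖²‖y‖² − ⟨x,y⟩²) φ_vv/u]`. -/
theorem fundamental_tensor_det {n : ℕ} (hn : 2 ≤ n) (φ : ℝ → ℝ → ℝ → ℝ)
    (hφ : ContDiffOn ℝ (⊤ : ℕ∞) (fun p : ℝ × ℝ × ℝ => φ p.1 p.2.1 p.2.2)
      {p : ℝ × ℝ × ℝ | 0 ≤ p.1 ∧ 0 < p.2.1})
    (hpos : ∀ r u v : ℝ, 0 ≤ r → 0 < u → 0 < φ r u v)
    (hhom : ∀ r u v c : ℝ, 0 < c → φ r (c * u) (c * v) = c * φ r u v)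
    (x y : E n) (hy : y ≠ 0)
    (r u v : ℝ) (hr : r = ‖x‖) (hu : u = ‖y‖) (hv : v = ⟪x, y⟫) :
    (Matrix.of fun i j => gF (fun a b => φ ‖a‖ ‖b‖ ⟪a, b⟫) i j x y).det =
      (φ r u v / u) ^ (n + 1) * (Du φ r u v) ^ (n - 2)
        * (Du φ r u v + (‖x‖ ^ 2 * ‖y‖ ^ 2 - ⟪x, y⟫ ^ 2) * Dv (Dv φ) r u v / u) := by
  subst hr hu hv
  set Φ : ℝ × ℝ → ℝ := fun q => φ ‖x‖ q.1 q.2 with hΦdef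
  have u0 : (0:ℝ) < ‖y‖ := norm_pos_iff.2 hy
  have hsm : ∀ q : ℝ × ℝ, 0 < q.1 → ContDiffAt ℝ (⊤ : ℕ∞) Φ q := by
    intro q hq
    have hmem : ((‖x‖, q.1, q.2) : ℝ × ℝ × ℝ) ∈ {p : ℝ × ℝ × ℝ | 0 ≤ p.1 ∧ 0 < p.2.1} :=
      ⟨norm_nonneg x, hq⟩
    have hout := hφ _ hmem
    have hin : ContDiffWithinAt ℝ (⊤ : ℕ∞) (fun w : ℝ × ℝ => ((‖x‖, w.1, w.2) : ℝ × ℝ × ℝ))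
        {w : ℝ × ℝ | 0 < w.1} q := by
      apply ContDiff.contDiffWithinAt
      exact contDiff_const.prodMk (contDiff_fst.prodMk contDiff_snd)
    have hmaps : Set.MapsTo (fun w : ℝ × ℝ => ((‖x‖, w.1, w.2) : ℝ × ℝ × ℝ))
        {w : ℝ × ℝ | 0 < w.1} {p : ℝ × ℝ × ℝ | 0 ≤ p.1 ∧ 0 < p.2.1} :=
      fun w hw => ⟨norm_nonneg x, hw⟩
    have hcomp := ContDiffWithinAt.comp q hout hin hmaps
    exact hcomp.contDiffAt (IsOpen.mem_nhds (isOpen_lt continuous_const continuous_fst) hq)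
  have hom : ∀ a b c : ℝ, 0 < c → Φ (c * a, c * b) = c * Φ (a, b) :=
    fun a b c hc => hhom ‖x‖ a b c hc
  have hDu : Du φ ‖x‖ ‖y‖ ⟪x, y⟫ = Pu Φ ((‖y‖, ⟪x, y⟫) : ℝ × ℝ) := by
    have h := hasDerivAt_slice_u (G := Φ) (diffPhi hsm ((‖y‖, ⟪x, y⟫) : ℝ × ℝ) u0)
    exact h.deriv
  have hDvv : Dv (Dv φ) ‖x‖ ‖y‖ ⟪x, y⟫ = Pv (Pv Φ) ((‖y‖, ⟪x, y⟫) : ℝ × ℝ) := by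
    have heq : (fun s : ℝ => Dv φ ‖x‖ ‖y‖ s) = fun s => Pv Φ ((‖y‖, s) : ℝ × ℝ) := by
      funext s
      exact (hasDerivAt_slice_v (G := Φ) (diffPhi hsm ((‖y‖, s) : ℝ × ℝ) u0)).deriv
    show deriv (fun s : ℝ => Dv φ ‖x‖ ‖y‖ s) ⟪x, y⟫ = _
    rw [heq]
    exact (hasDerivAt_slice_v (G := Pv Φ)
      ((contPv hsm ((‖y‖, ⟪x, y⟫) : ℝ × ℝ) u0).differentiableAt (by simp))).deriv
  have hentry : ∀ i j : Fin n, gF (fun a b => φ ‖a‖ ‖b‖ ⟪a, b⟫) i j x y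
      = Φ (‖y‖, ⟪x, y⟫) * Pu Φ (‖y‖, ⟪x, y⟫) / ‖y‖ * (if i = j then 1 else 0)
        + ((Pv Φ (‖y‖, ⟪x, y⟫)) ^ 2 + Φ (‖y‖, ⟪x, y⟫) * Pv (Pv Φ) (‖y‖, ⟪x, y⟫))
            * ((fun k => x k) i * (fun k => x k) j)
        + (Pu Φ (‖y‖, ⟪x, y⟫) * Pv Φ (‖y‖, ⟪x, y⟫) / ‖y‖
            - Φ (‖y‖, ⟪x, y⟫) * ⟪x, y⟫ * Pv (Pv Φ) (‖y‖, ⟪x, y⟫) / ‖y‖ ^ 2)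
          * ((fun k => x k) i * (fun k => y k) j + (fun k => y k) i * (fun k => x k) j)
        + ((Pu Φ (‖y‖, ⟪x, y⟫)) ^ 2 / ‖y‖ ^ 2
            + Φ (‖y‖, ⟪x, y⟫) * ⟪x, y⟫ ^ 2 * Pv (Pv Φ) (‖y‖, ⟪x, y⟫) / ‖y‖ ^ 4
            - Φ (‖y‖, ⟪x, y⟫) * Pu Φ (‖y‖, ⟪x, y⟫) / ‖y‖ ^ 3)
          * ((fun k => y k) i * (fun k => y k) j) := by
    intro i j
    exact gF_entry hsm hom x y hy i j
  have hsaa : ∑ i, (fun k => x k) i * (fun k => x k) i = ‖x‖ ^ 2 := by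
    rw [← real_inner_self_eq_norm_sq]
    simp only [PiLp.inner_apply, RCLike.inner_apply, conj_trivial]
  have hsab : ∑ i, (fun k => x k) i * (fun k => y k) i = ⟪x, y⟫ := by
    simp [PiLp.inner_apply, RCLike.inner_apply, mul_comm]
  have hsbb : ∑ i, (fun k => y k) i * (fun k => y k) i = ‖y‖ ^ 2 := by
    rw [← real_inner_self_eq_norm_sq]
    simp only [PiLp.inner_apply, RCLike.inner_apply, conj_trivial]
  have hdet : (Matrix.of fun i j => gF (fun a b => φ ‖a‖ ‖b‖ ⟪a, b⟫) i j x y).det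
      = (Matrix.of fun i j =>
          Φ (‖y‖, ⟪x, y⟫) * Pu Φ (‖y‖, ⟪x, y⟫) / ‖y‖ * (if i = j then 1 else 0)
        + ((Pv Φ (‖y‖, ⟪x, y⟫)) ^ 2 + Φ (‖y‖, ⟪x, y⟫) * Pv (Pv Φ) (‖y‖, ⟪x, y⟫))
            * ((fun k => x k) i * (fun k => x k) j)
        + (Pu Φ (‖y‖, ⟪x, y⟫) * Pv Φ (‖y‖, ⟪x, y⟫) / ‖y‖
            - Φ (‖y‖, ⟪x, y⟫) * ⟪x, y⟫ * Pv (Pv Φ) (‖y‖, ⟪x, y⟫) / ‖y‖ ^ 2)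
          * ((fun k => x k) i * (fun k => y k) j + (fun k => y k) i * (fun k => x k) j)
        + ((Pu Φ (‖y‖, ⟪x, y⟫)) ^ 2 / ‖y‖ ^ 2
            + Φ (‖y‖, ⟪x, y⟫) * ⟪x, y⟫ ^ 2 * Pv (Pv Φ) (‖y‖, ⟪x, y⟫) / ‖y‖ ^ 4
            - Φ (‖y‖, ⟪x, y⟫) * Pu Φ (‖y‖, ⟪x, y⟫) / ‖y‖ ^ 3)
          * ((fun k => y k) i * (fun k => y k) j)).det := by
    congr 1
    ext i j
    exact hentry i j
  rw [hdet]
  rw [det_rank_two hn _ _ _ _ _ _ _ (fun k => x k) (fun k => y k) hsaa hsab hsbb]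
  -- final algebra
  have hAeq : φ ‖x‖ ‖y‖ ⟪x, y⟫ = Φ (‖y‖, ⟪x, y⟫) := rfl
  rw [hAeq, hDu, hDvv]
  have euler' : ‖y‖ * Pu Φ ((‖y‖, ⟪x, y⟫) : ℝ × ℝ) + ⟪x, y⟫ * Pv Φ ((‖y‖, ⟪x, y⟫) : ℝ × ℝ)
      = Φ ((‖y‖, ⟪x, y⟫) : ℝ × ℝ) := euler hsm hom ((‖y‖, ⟪x, y⟫) : ℝ × ℝ) u0
  set A := Φ ((‖y‖, ⟪x, y⟫) : ℝ × ℝ) with hA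
  set B := Pu Φ ((‖y‖, ⟪x, y⟫) : ℝ × ℝ) with hB
  set C := Pv Φ ((‖y‖, ⟪x, y⟫) : ℝ × ℝ) with hC
  set W := Pv (Pv Φ) ((‖y‖, ⟪x, y⟫) : ℝ × ℝ) with hW
  have hu0 : ‖y‖ ≠ 0 := ne_of_gt u0
  have key : ((A * B / ‖y‖) ^ 2 + (A * B / ‖y‖) * ((C ^ 2 + A * W) * ‖x‖ ^ 2
        + 2 * (B * C / ‖y‖ - A * ⟪x, y⟫ * W / ‖y‖ ^ 2) * ⟪x, y⟫
        + (B ^ 2 / ‖y‖ ^ 2 + A * ⟪x, y⟫ ^ 2 * W / ‖y‖ ^ 4 - A * B / ‖y‖ ^ 3) * ‖y‖ ^ 2)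
      + ((C ^ 2 + A * W) * (B ^ 2 / ‖y‖ ^ 2 + A * ⟪x, y⟫ ^ 2 * W / ‖y‖ ^ 4 - A * B / ‖y‖ ^ 3)
          - (B * C / ‖y‖ - A * ⟪x, y⟫ * W / ‖y‖ ^ 2) ^ 2)
        * (‖x‖ ^ 2 * ‖y‖ ^ 2 - ⟪x, y⟫ ^ 2))
      = (A / ‖y‖) ^ 3 * (B + (‖x‖ ^ 2 * ‖y‖ ^ 2 - ⟪x, y⟫ ^ 2) * W / ‖y‖) := by
    rw [← euler']
    field_simp
    ring
  rw [key]
  have hp : (A * B / ‖y‖) ^ (n - 2) = (A / ‖y‖) ^ (n - 2) * B ^ (n - 2) := by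
    rw [← mul_pow]
    congr 1
    ring
  have hsplit : (A / ‖y‖) ^ (n + 1) = (A / ‖y‖) ^ (n - 2) * (A / ‖y‖) ^ 3 := by
    rw [← pow_add]
    congr 1
    omega
  rw [hp, hsplit]
  ring
end
end

section
/- Suppose φ(r,u,v) is a smooth positive function of r ≥ 0, u > 0, v ∈ ℝ that is positively homogeneous of degree one in (u,v), and suppose that φ_u > 0 and φ_uu ≥ 0 whenever u > 0 and r ≥ 0. Then F(x,y) := φ(‖x‖, ‖y‖, ⟨x,y⟩) is a Finsler metric on ℝⁿ: for every x and every y ≠ 0 the matrix (g_ij) = (½ ∂²(F²)/∂yⁱ∂yʲ) is positive definite. -/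
open scoped RealInnerProductSpace BigOperators

noncomputable section

namespace FinslerAux

abbrev Om : Set (ℝ × ℝ) := {p : ℝ × ℝ | 0 < p.1}

lemma isOpen_Om : IsOpen Om := isOpen_lt continuous_const continuous_fst

variable {f : ℝ × ℝ → ℝ}

lemma hfAt (hf : ContDiffOn ℝ (⊤ : ℕ∞) f Om) {p : ℝ × ℝ} (hp : 0 < p.1) : ContDiffAt ℝ (⊤ : ℕ∞) f p :=
  hf.contDiffAt (isOpen_Om.mem_nhds hp)

lemma hD (hf : ContDiffOn ℝ (⊤ : ℕ∞) f Om) {p : ℝ × ℝ} (hp : 0 < p.1) :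
    HasFDerivAt f (fderiv ℝ f p) p :=
  ((hfAt hf hp).differentiableAt (by simp)).hasFDerivAt

lemma hf' (hf : ContDiffOn ℝ (⊤ : ℕ∞) f Om) : ContDiffOn ℝ (⊤ : ℕ∞) (fderiv ℝ f) Om :=
  hf.fderiv_of_isOpen isOpen_Om (by simp)

lemma hS (hf : ContDiffOn ℝ (⊤ : ℕ∞) f Om) {p : ℝ × ℝ} (hp : 0 < p.1) :
    HasFDerivAt (fderiv ℝ f) (fderiv ℝ (fderiv ℝ f) p) p :=
  (((hf' hf).contDiffAt (isOpen_Om.mem_nhds hp)).differentiableAt (by simp)).hasFDerivAt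

lemma hSsymm (hf : ContDiffOn ℝ (⊤ : ℕ∞) f Om) {p : ℝ × ℝ} (hp : 0 < p.1) (z w : ℝ × ℝ) :
    fderiv ℝ (fderiv ℝ f) p z w = fderiv ℝ (fderiv ℝ f) p w z :=
  (hfAt hf hp).isSymmSndFDerivAt (by rw [minSmoothness_of_isRCLikeNormedField]; exact WithTop.coe_le_coe.2 (le_top : (2:ℕ∞) ≤ ⊤)) z w

lemma hScont (hf : ContDiffOn ℝ (⊤ : ℕ∞) f Om) :
    ContinuousOn (fderiv ℝ (fderiv ℝ f)) Om :=
  (ContDiffOn.fderiv_of_isOpen (m := (⊤ : ℕ∞)) (hf' hf) isOpen_Om (by simp)).continuousOn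

end FinslerAux
namespace FinslerAux
variable {f : ℝ × ℝ → ℝ}

lemma euler1 (hf : ContDiffOn ℝ (⊤ : ℕ∞) f Om)
    (hhom : ∀ (p : ℝ × ℝ) (c : ℝ), 0 < c → f (c • p) = c * f p)
    {p : ℝ × ℝ} (hp : 0 < p.1) : fderiv ℝ f p p = f p := by
  have hl : HasDerivAt (fun t : ℝ => t • p) p 1 := by
    simpa using (hasDerivAt_id (1:ℝ)).smul_const p
  have hfd : HasFDerivAt f (fderiv ℝ f p) ((1:ℝ) • p) := by
    rw [one_smul]; exact hD hf hp
  have h1 : HasDerivAt (fun t : ℝ => f (t • p)) (fderiv ℝ f p p) 1 :=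
    hfd.comp_hasDerivAt 1 hl
  have h2 : HasDerivAt (fun t : ℝ => t * f p) (f p) 1 := by
    simpa using (hasDerivAt_id (1:ℝ)).mul_const (f p)
  have heq : (fun t : ℝ => f (t • p)) =ᶠ[nhds 1] (fun t => t * f p) := by
    filter_upwards [eventually_gt_nhds zero_lt_one] with t ht
    exact hhom p t ht
  exact (h1.congr_of_eventuallyEq heq.symm).unique h2

lemma fderiv_homog (hf : ContDiffOn ℝ (⊤ : ℕ∞) f Om)
    (hhom : ∀ (p : ℝ × ℝ) (c : ℝ), 0 < c → f (c • p) = c * f p)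
    {p : ℝ × ℝ} (hp : 0 < p.1) {c : ℝ} (hc : 0 < c) :
    fderiv ℝ f (c • p) = fderiv ℝ f p := by
  have hcp : 0 < (c • p).1 := by
    simpa [smul_eq_mul] using mul_pos hc hp
  have hl : HasFDerivAt (fun q : ℝ × ℝ => c • q) (c • ContinuousLinearMap.id ℝ (ℝ × ℝ)) p :=
    (hasFDerivAt_id p).const_smul c
  have h1 : HasFDerivAt (fun q => f (c • q))
      ((fderiv ℝ f (c • p)).comp (c • ContinuousLinearMap.id ℝ (ℝ × ℝ))) p :=
    (hD hf hcp).comp p hl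
  have h2 : HasFDerivAt (fun q => c * f q) (c • fderiv ℝ f p) p :=
    (hD hf hp).const_mul c
  have heq : (fun q => f (c • q)) = fun q => c * f q := funext fun q => hhom q c hc
  rw [heq] at h1
  have h3 := h1.unique h2
  refine ContinuousLinearMap.ext fun z => ?_
  have h4 : fderiv ℝ f (c • p) (c • z) = c * fderiv ℝ f p z := by
    have h5 := ContinuousLinearMap.ext_iff.1 h3 z
    simpa using h5
  rw [map_smul, smul_eq_mul] at h4
  exact mul_left_cancel₀ (ne_of_gt hc) h4

end FinslerAux
namespace FinslerAux
variable {f : ℝ × ℝ → ℝ}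

lemma euler2 (hf : ContDiffOn ℝ (⊤ : ℕ∞) f Om)
    (hhom : ∀ (p : ℝ × ℝ) (c : ℝ), 0 < c → f (c • p) = c * f p)
    {p : ℝ × ℝ} (hp : 0 < p.1) : fderiv ℝ (fderiv ℝ f) p p = 0 := by
  have hl : HasDerivAt (fun t : ℝ => t • p) p 1 := by
    simpa using (hasDerivAt_id (1:ℝ)).smul_const p
  have hfd : HasFDerivAt (fderiv ℝ f) (fderiv ℝ (fderiv ℝ f) p) ((1:ℝ) • p) := by
    rw [one_smul]; exact hS hf hp
  have h1 : HasDerivAt (fun t : ℝ => fderiv ℝ f (t • p)) (fderiv ℝ (fderiv ℝ f) p p) 1 :=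
    hfd.comp_hasDerivAt 1 hl
  have h2 : HasDerivAt (fun _ : ℝ => fderiv ℝ f p) (0 : (ℝ × ℝ) →L[ℝ] ℝ) 1 :=
    hasDerivAt_const 1 _
  have heq : (fun t : ℝ => fderiv ℝ f (t • p)) =ᶠ[nhds 1] fun _ => fderiv ℝ f p := by
    filter_upwards [eventually_gt_nhds zero_lt_one] with t ht
    exact fderiv_homog hf hhom hp ht
  exact (h1.congr_of_eventuallyEq heq.symm).unique h2

/-- Bilinear expansion: if `z = α • p + β • e` then `S z z = β^2 * S e e`,
given `S p = 0` and symmetry. -/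
lemma quad_expand (S : (ℝ × ℝ) →L[ℝ] (ℝ × ℝ) →L[ℝ] ℝ) (p e z : ℝ × ℝ) (α β : ℝ)
    (hz : z = α • p + β • e) (hSp : S p = 0)
    (hsym : S e p = S p e) : S z z = β ^ 2 * S e e := by
  subst hz
  simp only [map_add, map_smul, hSp, ContinuousLinearMap.add_apply,
    ContinuousLinearMap.smul_apply, ContinuousLinearMap.zero_apply, ContinuousLinearMap.map_add,
    ContinuousLinearMap.map_smul, hsym]
  simp only [hSp, ContinuousLinearMap.zero_apply, smul_eq_mul]
  ring

lemma hessA (hf : ContDiffOn ℝ (⊤ : ℕ∞) f Om)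
    (hhom : ∀ (p : ℝ × ℝ) (c : ℝ), 0 < c → f (c • p) = c * f p)
    (hPuu : ∀ p : ℝ × ℝ, 0 < p.1 → 0 ≤ fderiv ℝ (fderiv ℝ f) p (1, 0) (1, 0))
    {p : ℝ × ℝ} (hp : 0 < p.1) (hv : p.2 ≠ 0) (z : ℝ × ℝ) :
    0 ≤ fderiv ℝ (fderiv ℝ f) p z z := by
  have hz : z = (z.2 / p.2) • p + (z.1 - p.1 * z.2 / p.2) • ((1:ℝ), (0:ℝ)) := by
    refine Prod.ext ?_ ?_ <;> simp <;> field_simp <;> ring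
  rw [quad_expand _ p _ z _ _ hz (euler2 hf hhom hp) (hSsymm hf hp _ _)]
  exact mul_nonneg (sq_nonneg _) (hPuu p hp)

lemma hessPSD (hf : ContDiffOn ℝ (⊤ : ℕ∞) f Om)
    (hhom : ∀ (p : ℝ × ℝ) (c : ℝ), 0 < c → f (c • p) = c * f p)
    (hPuu : ∀ p : ℝ × ℝ, 0 < p.1 → 0 ≤ fderiv ℝ (fderiv ℝ f) p (1, 0) (1, 0))
    {p : ℝ × ℝ} (hp : 0 < p.1) (z : ℝ × ℝ) :
    0 ≤ fderiv ℝ (fderiv ℝ f) p z z := by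
  rcases ne_or_eq p.2 0 with hv | hv
  · exact hessA hf hhom hPuu hp hv z
  have hp0 : p = (p.1, (0:ℝ)) := by rw [← hv]
  have hPvv : 0 ≤ fderiv ℝ (fderiv ℝ f) p (0, 1) (0, 1) := by
    set g : ℝ → ℝ := fun v => fderiv ℝ (fderiv ℝ f) (p.1, v) (0, 1) (0, 1) with hg
    have h1 : ContinuousAt (fun v : ℝ => (p.1, v)) 0 :=
      (continuous_const.prodMk continuous_id).continuousAt
    have h2 : ContinuousAt (fderiv ℝ (fderiv ℝ f)) (p.1, (0:ℝ)) := by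
      rw [← hp0]
      exact (hScont hf).continuousAt (isOpen_Om.mem_nhds hp)
    have h3 : Continuous fun A : (ℝ × ℝ) →L[ℝ] (ℝ × ℝ) →L[ℝ] ℝ => A (0, 1) (0, 1) :=
      ((ContinuousLinearMap.apply ℝ ℝ ((0:ℝ), (1:ℝ))).comp
        (ContinuousLinearMap.apply ℝ ((ℝ × ℝ) →L[ℝ] ℝ) ((0:ℝ), (1:ℝ)))).continuous
    have hcont : ContinuousAt g 0 := (h3.continuousAt.comp h2).comp h1
    have hge : ∀ᶠ v in nhdsWithin (0:ℝ) {0}ᶜ, 0 ≤ g v := by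
      filter_upwards [self_mem_nhdsWithin] with v hv'
      exact hessA hf hhom hPuu (p := (p.1, v)) hp (by simpa using hv') (0, 1)
    have htd : Filter.Tendsto g (nhdsWithin (0:ℝ) {0}ᶜ) (nhds (g 0)) :=
      hcont.continuousWithinAt
    have h5 := ge_of_tendsto htd hge
    rw [hg] at h5
    simp only [← hp0] at h5
    exact h5
  have hz : z = (z.1 / p.1) • p + z.2 • ((0:ℝ), (1:ℝ)) := by
    refine Prod.ext ?_ ?_ <;> simp [hv] <;> field_simp
  rw [quad_expand _ p _ z _ _ hz (euler2 hf hhom hp) (hSsymm hf hp _ _)]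
  exact mul_nonneg (sq_nonneg _) hPvv

lemma key2d (hf : ContDiffOn ℝ (⊤ : ℕ∞) f Om)
    (hhom : ∀ (p : ℝ × ℝ) (c : ℝ), 0 < c → f (c • p) = c * f p)
    (hpos : ∀ p : ℝ × ℝ, 0 < p.1 → 0 < f p)
    (hPu : ∀ p : ℝ × ℝ, 0 < p.1 → 0 < fderiv ℝ f p (1, 0))
    (hPuu : ∀ p : ℝ × ℝ, 0 < p.1 → 0 ≤ fderiv ℝ (fderiv ℝ f) p (1, 0) (1, 0))
    {p : ℝ × ℝ} (hp : 0 < p.1) (z : ℝ × ℝ) (k : ℝ) (hk : 0 ≤ k)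
    (hnd : 0 < k ∨ ∃ μ : ℝ, μ ≠ 0 ∧ z = μ • p) :
    0 < (fderiv ℝ f p z) ^ 2 +
      f p * (fderiv ℝ (fderiv ℝ f) p z z + k * fderiv ℝ f p (1, 0)) := by
  have h1 := hessPSD hf hhom hPuu hp z
  have h2 := hpos p hp
  have h3 := hPu p hp
  rcases hnd with hk0 | ⟨μ, hμ, rfl⟩
  · nlinarith [mul_pos h2 (mul_pos hk0 h3), mul_nonneg h2.le h1,
      sq_nonneg (fderiv ℝ f p z)]
  · have hA : fderiv ℝ f p (μ • p) = μ * f p := by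
      rw [map_smul, euler1 hf hhom hp, smul_eq_mul]
    rw [hA]
    have h4 : 0 < (μ * f p) ^ 2 := by positivity
    nlinarith [mul_nonneg h2.le h1, mul_nonneg (mul_nonneg h2.le hk) h3.le]

end FinslerAux

namespace FinslerAux

lemma f_smooth (φ : ℝ → ℝ → ℝ → ℝ)
    (hφ : ContDiffOn ℝ (⊤ : ℕ∞) (fun p : ℝ × ℝ × ℝ => φ p.1 p.2.1 p.2.2)
      {p : ℝ × ℝ × ℝ | 0 ≤ p.1 ∧ 0 < p.2.1})
    {r : ℝ} (hr : 0 ≤ r) : ContDiffOn ℝ (⊤ : ℕ∞) (fun q : ℝ × ℝ => φ r q.1 q.2) Om :=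
  hφ.comp (contDiff_const.prodMk contDiff_id).contDiffOn (fun q hq => ⟨hr, hq⟩)

lemma Du_eq (φ : ℝ → ℝ → ℝ → ℝ) {r : ℝ}
    (hf : ContDiffOn ℝ (⊤ : ℕ∞) (fun q : ℝ × ℝ => φ r q.1 q.2) Om)
    {u v : ℝ} (hu : 0 < u) :
    Du φ r u v = fderiv ℝ (fun q : ℝ × ℝ => φ r q.1 q.2) (u, v) (1, 0) := by
  have hline : HasDerivAt (fun s : ℝ => ((s, v) : ℝ × ℝ)) ((1:ℝ), (0:ℝ)) u :=
    (hasDerivAt_id u).prodMk (hasDerivAt_const u v)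
  have h := (hD hf (p := (u, v)) hu).comp_hasDerivAt u hline
  exact h.deriv

lemma Duu_eq (φ : ℝ → ℝ → ℝ → ℝ) {r : ℝ}
    (hf : ContDiffOn ℝ (⊤ : ℕ∞) (fun q : ℝ × ℝ => φ r q.1 q.2) Om)
    {u v : ℝ} (hu : 0 < u) :
    Du (Du φ) r u v
      = fderiv ℝ (fderiv ℝ (fun q : ℝ × ℝ => φ r q.1 q.2)) (u, v) (1, 0) (1, 0) := by
  set f : ℝ × ℝ → ℝ := fun q => φ r q.1 q.2 with hfdef
  have hline : HasDerivAt (fun s : ℝ => ((s, v) : ℝ × ℝ)) ((1:ℝ), (0:ℝ)) u :=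
    (hasDerivAt_id u).prodMk (hasDerivAt_const u v)
  have hC : HasDerivAt (fun s : ℝ => fderiv ℝ f (s, v))
      (fderiv ℝ (fderiv ℝ f) (u, v) (1, 0)) u :=
    (hS hf (p := (u, v)) hu).comp_hasDerivAt u hline
  have hA : HasDerivAt (fun s : ℝ => fderiv ℝ f (s, v) ((1:ℝ), (0:ℝ)))
      (fderiv ℝ (fderiv ℝ f) (u, v) (1, 0) (1, 0)) u := by
    have := hC.clm_apply (hasDerivAt_const u ((1:ℝ), (0:ℝ)))
    simpa using this
  have heq : (fun s : ℝ => Du φ r s v) =ᶠ[nhds u]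
      (fun s : ℝ => fderiv ℝ f (s, v) ((1:ℝ), (0:ℝ))) := by
    filter_upwards [eventually_gt_nhds hu] with s hs
    exact Du_eq φ hf hs
  have : Du (Du φ) r u v = deriv (fun s : ℝ => Du φ r s v) u := rfl
  rw [this, heq.deriv_eq, hA.deriv]

end FinslerAux

set_option maxHeartbeats 1000000 in
/-- If `φ(r,u,v)` is smooth, positive, positively 1-homogeneous in `(u,v)`, and satisfies
`φ_u > 0`, `φ_uu ≥ 0` for `u > 0`, `r ≥ 0`, then `F(x,y) = φ(‖x‖,‖y‖,⟨x,y⟩)` is a Finsler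
metric on `ℝⁿ`: its fundamental tensor is positive definite for every `y ≠ 0`. -/
theorem phi_gives_finsler_metric {n : ℕ} (φ : ℝ → ℝ → ℝ → ℝ)
    (hφ : ContDiffOn ℝ (⊤ : ℕ∞) (fun p : ℝ × ℝ × ℝ => φ p.1 p.2.1 p.2.2)
      {p : ℝ × ℝ × ℝ | 0 ≤ p.1 ∧ 0 < p.2.1})
    (hpos : ∀ r u v : ℝ, 0 ≤ r → 0 < u → 0 < φ r u v)
    (hhom : ∀ r u v c : ℝ, 0 < c → φ r (c * u) (c * v) = c * φ r u v)
    (hDu : ∀ r u v : ℝ, 0 ≤ r → 0 < u → 0 < Du φ r u v)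
    (hDuu : ∀ r u v : ℝ, 0 ≤ r → 0 < u → 0 ≤ Du (Du φ) r u v) :
    ∀ x : E n, ∀ y : E n, y ≠ 0 →
      (Matrix.of fun i j => gF (fun a b => φ ‖a‖ ‖b‖ ⟪a, b⟫) i j x y).PosDef := by
  intro x y hy
  have hr : (0:ℝ) ≤ ‖x‖ := norm_nonneg x
  set r : ℝ := ‖x‖ with hrdef
  set f : ℝ × ℝ → ℝ := fun q => φ r q.1 q.2 with hfdef
  have hf : ContDiffOn ℝ (⊤ : ℕ∞) f FinslerAux.Om := FinslerAux.f_smooth φ hφ hr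
  have hhom2 : ∀ (p : ℝ × ℝ) (c : ℝ), 0 < c → f (c • p) = c * f p := by
    intro p c hc
    simpa [hfdef, Prod.smul_fst, Prod.smul_snd, smul_eq_mul] using hhom r p.1 p.2 c hc
  have hpos2 : ∀ p : ℝ × ℝ, 0 < p.1 → 0 < f p := fun p hp => hpos r p.1 p.2 hr hp
  have hPu2 : ∀ p : ℝ × ℝ, 0 < p.1 → 0 < fderiv ℝ f p (1, 0) := by
    rintro ⟨u, v⟩ hu
    have h1 := hDu r u v hr hu
    rwa [FinslerAux.Du_eq φ hf hu] at h1
  have hPuu2 : ∀ p : ℝ × ℝ, 0 < p.1 → 0 ≤ fderiv ℝ (fderiv ℝ f) p (1, 0) (1, 0) := by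
    rintro ⟨u, v⟩ hu
    have h1 := hDuu r u v hr hu
    rwa [FinslerAux.Duu_eq φ hf hu] at h1
  set G : E n → ℝ := fun b => f (‖b‖, ⟪x, b⟫) ^ 2 with hGdef
  have hGc : ∀ b : E n, b ≠ 0 → ContDiffAt ℝ (⊤ : ℕ∞) G b := by
    intro b hb
    have hm : ContDiffAt ℝ (⊤ : ℕ∞) (fun b : E n => ((‖b‖, ⟪x, b⟫) : ℝ × ℝ)) b :=
      (contDiffAt_norm (𝕜 := ℝ) hb).prodMk (innerSL ℝ x).contDiff.contDiffAt
    have hfb : ContDiffAt ℝ (⊤ : ℕ∞) f (‖b‖, ⟪x, b⟫) :=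
      hf.contDiffAt (FinslerAux.isOpen_Om.mem_nhds (norm_pos_iff.2 hb))
    exact (hfb.comp b hm).pow 2
  have hGd : ∀ b : E n, b ≠ 0 → HasFDerivAt G (fderiv ℝ G b) b :=
    fun b hb => ((hGc b hb).differentiableAt (by simp)).hasFDerivAt
  have hGS : HasFDerivAt (fderiv ℝ G) (fderiv ℝ (fderiv ℝ G) y) y := by
    have h1 := (hGc y hy).fderiv_right (m := (⊤ : ℕ∞)) (by simp)
    exact (h1.differentiableAt (by simp)).hasFDerivAt
  have hline : ∀ (b V : E n) (t : ℝ), HasDerivAt (fun s : ℝ => b + s • V) V t := by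
    intro b V t
    simpa using ((hasDerivAt_id t).smul_const V).const_add b
  have hpdy : ∀ b : E n, b ≠ 0 → ∀ i : Fin n,
      pdy (fun c d => (φ ‖c‖ ‖d‖ ⟪c, d⟫) ^ 2) i x b
        = fderiv ℝ G b (EuclideanSpace.single i 1) := by
    intro b hb i
    have hfd : HasFDerivAt G (fderiv ℝ G b) (b + (0:ℝ) • EuclideanSpace.single i (1:ℝ)) := by
      simpa using hGd b hb
    have h1 : HasDerivAt (fun t : ℝ => G (b + t • EuclideanSpace.single i (1:ℝ)))
        (fderiv ℝ G b (EuclideanSpace.single i 1)) 0 := by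
      have h := hfd.comp_hasDerivAt 0 (hline b (EuclideanSpace.single i (1:ℝ)) 0)
      exact h
    simp only [pdy]
    exact h1.deriv
  have hgF : ∀ i j : Fin n, gF (fun a b => φ ‖a‖ ‖b‖ ⟪a, b⟫) i j x y
      = (1/2) * fderiv ℝ (fderiv ℝ G) y (EuclideanSpace.single j 1) (EuclideanSpace.single i 1) := by
    intro i j
    have hev : ∀ᶠ t : ℝ in nhds 0, y + t • EuclideanSpace.single j (1:ℝ) ≠ 0 := by
      exact (hline y (EuclideanSpace.single j (1:ℝ)) 0).continuousAt.eventually_ne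
        (by simpa using hy)
    have heq : (fun t : ℝ => pdy (fun c d => (φ ‖c‖ ‖d‖ ⟪c, d⟫) ^ 2) i x
          (y + t • EuclideanSpace.single j (1:ℝ)))
        =ᶠ[nhds 0] fun t =>
          fderiv ℝ G (y + t • EuclideanSpace.single j (1:ℝ)) (EuclideanSpace.single i 1) := by
      filter_upwards [hev] with t ht using hpdy _ ht i
    have hC : HasDerivAt (fun t : ℝ => fderiv ℝ G (y + t • EuclideanSpace.single j (1:ℝ)))
        (fderiv ℝ (fderiv ℝ G) y (EuclideanSpace.single j 1)) 0 := by
      have hfd : HasFDerivAt (fderiv ℝ G) (fderiv ℝ (fderiv ℝ G) y)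
          (y + (0:ℝ) • EuclideanSpace.single j (1:ℝ)) := by simpa using hGS
      exact hfd.comp_hasDerivAt 0 (hline y _ 0)
    have hDer : HasDerivAt (fun t : ℝ =>
          fderiv ℝ G (y + t • EuclideanSpace.single j (1:ℝ)) (EuclideanSpace.single i 1))
        (fderiv ℝ (fderiv ℝ G) y (EuclideanSpace.single j 1) (EuclideanSpace.single i 1)) 0 := by
      simpa using hC.clm_apply (hasDerivAt_const 0 (EuclideanSpace.single i (1:ℝ)))
    simp only [gF]
    congr 1
    show deriv (fun t : ℝ => pdy (fun c d => (φ ‖c‖ ‖d‖ ⟪c, d⟫) ^ 2) i x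
        (y + t • EuclideanSpace.single j (1:ℝ))) 0 = _
    rw [heq.deriv_eq, hDer.deriv]
  have hsymG : ∀ z w : E n, fderiv ℝ (fderiv ℝ G) y z w = fderiv ℝ (fderiv ℝ G) y w z :=
    (hGc y hy).isSymmSndFDerivAt (by rw [minSmoothness_of_isRCLikeNormedField]; exact WithTop.coe_le_coe.2 (le_top : (2:ℕ∞) ≤ ⊤))
  refine Matrix.PosDef.of_dotProduct_mulVec_pos ?_ ?_
  · show _ = _
    refine Matrix.ext fun i j => ?_
    simp only [Matrix.conjTranspose_apply, Matrix.of_apply, star_trivial]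
    rw [hgF j i, hgF i j, hsymG]
  · intro w hw
    set W : E n := (WithLp.equiv 2 (Fin n → ℝ)).symm w with hWdef
    have hWa : ∀ i, W i = w i := fun _ => rfl
    have hW0 : W ≠ 0 := by
      intro h
      apply hw
      funext i
      have h2 : W i = 0 := by rw [h]; rfl
      rw [← hWa i]
      exact h2
    have hWsum : W = ∑ i, w i • EuclideanSpace.single i (1:ℝ) := by
      ext k
      rw [WithLp.ofLp_sum, Finset.sum_apply]
      simp only [PiLp.smul_apply, EuclideanSpace.single_apply, smul_eq_mul, mul_ite, mul_one,
        mul_zero]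
      rw [Finset.sum_ite_eq Finset.univ k w]
      simp [hWa]
    have hWW : fderiv ℝ (fderiv ℝ G) y W W
        = ∑ i, ∑ j, w i * w j
            * fderiv ℝ (fderiv ℝ G) y (EuclideanSpace.single i 1) (EuclideanSpace.single j 1) := by
      conv_lhs => rw [hWsum]
      simp only [map_sum, map_smul, ContinuousLinearMap.sum_apply,
        ContinuousLinearMap.smul_apply, smul_eq_mul, Finset.mul_sum, Finset.sum_mul]
      refine Finset.sum_congr rfl fun i _ => Finset.sum_congr rfl fun j _ => by
        rw [hsymG (EuclideanSpace.single j 1) (EuclideanSpace.single i 1)]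
        ring
    have hform : dotProduct (star w)
          (Matrix.mulVec (Matrix.of fun i j => gF (fun a b => φ ‖a‖ ‖b‖ ⟪a, b⟫) i j x y) w)
        = (1/2) * fderiv ℝ (fderiv ℝ G) y W W := by
      rw [hWW]
      simp only [dotProduct, Matrix.mulVec, Matrix.of_apply, hgF, Finset.mul_sum,
        Pi.star_apply, star_trivial]
      refine Finset.sum_congr rfl fun i _ => ?_
      refine Finset.sum_congr rfl fun j _ => ?_
      rw [hsymG (EuclideanSpace.single j 1) (EuclideanSpace.single i 1)]
      ring
    -- analytic part
    have hu0 : (0:ℝ) < ‖y‖ := norm_pos_iff.2 hy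
    set p0 : ℝ × ℝ := (‖y‖, ⟪x, y⟫) with hp0def
    have hp0 : 0 < p0.1 := hu0
    set a : ℝ := ⟪y, W⟫ / ‖y‖ with hadef
    set cc : ℝ := ⟪x, W⟫ with hccdef
    set kk : ℝ := (‖W‖^2 * ‖y‖ - ⟪y, W⟫ * a) / ‖y‖^2 with hkkdef
    have hNt : ∀ t : ℝ, y + t • W ≠ 0 →
        HasDerivAt (fun s : ℝ => ‖y + s • W‖) (⟪y + t • W, W⟫ / ‖y + t • W‖) t := by
      intro t ht
      have hQ : HasDerivAt (fun s : ℝ => (⟪y + s • W, y + s • W⟫ : ℝ))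
          (2 * ⟪y + t • W, W⟫) t := by
        have h1 := (hline y W t).inner ℝ (hline y W t)
        have e : 2 * ⟪y + t • W, W⟫ = ⟪y + t • W, W⟫ + ⟪W, y + t • W⟫ := by
          rw [real_inner_comm (y + t • W) W]
          ring
        rw [e]
        exact h1
      have hQ0 : (⟪y + t • W, y + t • W⟫ : ℝ) ≠ 0 := by
        rw [real_inner_self_eq_norm_sq]
        simpa using pow_ne_zero 2 (norm_ne_zero_iff.2 ht)
      have hs := (Real.hasDerivAt_sqrt hQ0).comp t hQ
      have hfun : (fun s : ℝ => Real.sqrt (⟪y + s • W, y + s • W⟫ : ℝ))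
          = fun s : ℝ => ‖y + s • W‖ := by
        funext s
        rw [real_inner_self_eq_norm_sq, Real.sqrt_sq (norm_nonneg _)]
      have hs2 : HasDerivAt (fun s : ℝ => ‖y + s • W‖)
          (1 / (2 * Real.sqrt (⟪y + t • W, y + t • W⟫ : ℝ)) * (2 * ⟪y + t • W, W⟫)) t := by
        rw [← hfun]
        exact hs
      convert hs2 using 1
      rw [real_inner_self_eq_norm_sq, Real.sqrt_sq (norm_nonneg _)]
      have hN0 : ‖y + t • W‖ ≠ 0 := norm_ne_zero_iff.2 ht
      field_simp
    have hVt : ∀ t : ℝ, HasDerivAt (fun s : ℝ => (⟪x, y + s • W⟫ : ℝ)) cc t := by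
      intro t
      have hfun : (fun s : ℝ => (⟪x, y + s • W⟫ : ℝ)) = fun s : ℝ => ⟪x, y⟫ + s * cc := by
        funext s
        rw [inner_add_right, real_inner_smul_right, hccdef]
      rw [hfun]
      simpa using ((hasDerivAt_id t).mul_const cc).const_add (⟪x, y⟫ : ℝ)
    have hnum : ∀ t : ℝ, HasDerivAt (fun s : ℝ => (⟪y + s • W, W⟫ : ℝ)) (‖W‖^2) t := by
      intro t
      have hfun : (fun s : ℝ => (⟪y + s • W, W⟫ : ℝ)) = fun s : ℝ => ⟪y, W⟫ + s * ‖W‖^2 := by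
        funext s
        rw [inner_add_left, real_inner_smul_left, real_inner_self_eq_norm_sq]
      rw [hfun]
      simpa using ((hasDerivAt_id t).mul_const (‖W‖^2)).const_add (⟪y, W⟫ : ℝ)
    have hform2 : ∀ t : ℝ, y + t • W ≠ 0 →
        fderiv ℝ G (y + t • W) W
          = 2 * f (‖y + t • W‖, ⟪x, y + t • W⟫)
              * fderiv ℝ f (‖y + t • W‖, ⟪x, y + t • W⟫) (⟪y + t • W, W⟫ / ‖y + t • W‖, cc) := by
      intro t ht
      have hL : HasDerivAt (fun s : ℝ => G (y + s • W)) (fderiv ℝ G (y + t • W) W) t := by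
        have h := (hGd _ ht).comp_hasDerivAt t (hline y W t)
        exact h
      have hγ : HasDerivAt (fun s : ℝ => ((‖y + s • W‖, ⟪x, y + s • W⟫) : ℝ × ℝ))
          ((⟪y + t • W, W⟫ / ‖y + t • W‖, cc)) t := (hNt t ht).prodMk (hVt t)
      have hp' : HasDerivAt (fun s : ℝ => f (‖y + s • W‖, ⟪x, y + s • W⟫))
          (fderiv ℝ f (‖y + t • W‖, ⟪x, y + t • W⟫) (⟪y + t • W, W⟫ / ‖y + t • W‖, cc)) t :=
        (FinslerAux.hD hf (norm_pos_iff.2 ht)).comp_hasDerivAt t hγ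
      have hsq : HasDerivAt (fun s : ℝ => f (‖y + s • W‖, ⟪x, y + s • W⟫) ^ 2)
          (2 * f (‖y + t • W‖, ⟪x, y + t • W⟫)
            * fderiv ℝ f (‖y + t • W‖, ⟪x, y + t • W⟫) (⟪y + t • W, W⟫ / ‖y + t • W‖, cc)) t := by
        exact (hp'.pow 2).congr_deriv (by
          rw [show (2:ℕ) - 1 = 1 from rfl, pow_one]; push_cast; ring)
      exact hL.unique hsq
    have hev0 : ∀ᶠ t : ℝ in nhds 0, y + t • W ≠ 0 := by
      exact (hline y W 0).continuousAt.eventually_ne (by simpa using hy)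
    have heqR : (fun t : ℝ => fderiv ℝ G (y + t • W) W) =ᶠ[nhds 0]
        (fun t : ℝ => 2 * f (‖y + t • W‖, ⟪x, y + t • W⟫)
          * fderiv ℝ f (‖y + t • W‖, ⟪x, y + t • W⟫) (⟪y + t • W, W⟫ / ‖y + t • W‖, cc)) := by
      filter_upwards [hev0] with t ht using hform2 t ht
    have hLL : HasDerivAt (fun t : ℝ => fderiv ℝ G (y + t • W) W)
        (fderiv ℝ (fderiv ℝ G) y W W) 0 := by
      have hfd : HasFDerivAt (fderiv ℝ G) (fderiv ℝ (fderiv ℝ G) y) (y + (0:ℝ) • W) := by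
        simpa using hGS
      have hC : HasDerivAt (fun t : ℝ => fderiv ℝ G (y + t • W))
          (fderiv ℝ (fderiv ℝ G) y W) 0 := hfd.comp_hasDerivAt 0 (hline y W 0)
      simpa using hC.clm_apply (hasDerivAt_const 0 W)
    have hy0 : y + (0:ℝ) • W = y := by simp
    have hγ0 : HasDerivAt (fun s : ℝ => ((‖y + s • W‖, ⟪x, y + s • W⟫) : ℝ × ℝ)) ((a, cc)) 0 := by
      have h1 := (hNt 0 (by simpa using hy)).prodMk (hVt 0)
      simpa only [zero_smul, add_zero] using h1
    have hpf0 : HasDerivAt (fun s : ℝ => f (‖y + s • W‖, ⟪x, y + s • W⟫))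
        (fderiv ℝ f p0 (a, cc)) 0 := by
      have hfd : HasFDerivAt f (fderiv ℝ f p0) ((‖y + (0:ℝ) • W‖, ⟪x, y + (0:ℝ) • W⟫)) := by
        rw [hy0]
        exact FinslerAux.hD hf hp0
      exact hfd.comp_hasDerivAt 0 hγ0
    have hCf : HasDerivAt (fun s : ℝ => fderiv ℝ f (‖y + s • W‖, ⟪x, y + s • W⟫))
        (fderiv ℝ (fderiv ℝ f) p0 (a, cc)) 0 := by
      have hfd : HasFDerivAt (fderiv ℝ f) (fderiv ℝ (fderiv ℝ f) p0)
          ((‖y + (0:ℝ) • W‖, ⟪x, y + (0:ℝ) • W⟫)) := by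
        rw [hy0]
        exact FinslerAux.hS hf hp0
      exact hfd.comp_hasDerivAt 0 hγ0
    have hdu : HasDerivAt (fun s : ℝ => (⟪y + s • W, W⟫ : ℝ) / ‖y + s • W‖) kk 0 := by
      have h1 := (hnum 0).div (hNt 0 (by simpa using hy)) (by rw [hy0]; exact hu0.ne')
      rw [hkkdef, hadef]
      rw [hy0] at h1
      exact h1
    have happ : HasDerivAt (fun s : ℝ =>
          fderiv ℝ f (‖y + s • W‖, ⟪x, y + s • W⟫) ((⟪y + s • W, W⟫ : ℝ) / ‖y + s • W‖, cc))
        (fderiv ℝ (fderiv ℝ f) p0 (a, cc) (a, cc) + fderiv ℝ f p0 (kk, 0)) 0 := by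
      have hu' : HasDerivAt (fun s : ℝ =>
            (((⟪y + s • W, W⟫ : ℝ) / ‖y + s • W‖, cc) : ℝ × ℝ)) ((kk, 0)) 0 :=
        hdu.prodMk (hasDerivAt_const 0 cc)
      have h1 := hCf.clm_apply hu'
      simpa only [zero_smul, add_zero] using h1
    have hRR : HasDerivAt (fun t : ℝ => 2 * f (‖y + t • W‖, ⟪x, y + t • W⟫)
          * fderiv ℝ f (‖y + t • W‖, ⟪x, y + t • W⟫) ((⟪y + t • W, W⟫ : ℝ) / ‖y + t • W‖, cc))
        (2 * fderiv ℝ f p0 (a, cc) * fderiv ℝ f p0 (a, cc)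
          + 2 * f p0 * (fderiv ℝ (fderiv ℝ f) p0 (a, cc) (a, cc) + fderiv ℝ f p0 (kk, 0))) 0 := by
      have h2p : HasDerivAt (fun s : ℝ => 2 * f (‖y + s • W‖, ⟪x, y + s • W⟫))
          (2 * fderiv ℝ f p0 (a, cc)) 0 := hpf0.const_mul 2
      have h1 := h2p.mul happ
      simp only [zero_smul, add_zero, ← hp0def, ← hadef] at h1
      exact h1
    have hval : fderiv ℝ (fderiv ℝ G) y W W
        = 2 * fderiv ℝ f p0 (a, cc) * fderiv ℝ f p0 (a, cc)
          + 2 * f p0 * (fderiv ℝ (fderiv ℝ f) p0 (a, cc) (a, cc) + fderiv ℝ f p0 (kk, 0)) :=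
      hLL.unique (hRR.congr_of_eventuallyEq heqR)
    have hk0' : fderiv ℝ f p0 (kk, 0) = kk * fderiv ℝ f p0 (1, 0) := by
      have h1 : ((kk, (0:ℝ)) : ℝ × ℝ) = kk • ((1:ℝ), (0:ℝ)) := by
        simp [Prod.smul_mk]
      rw [h1, map_smul, smul_eq_mul]
    have hCS : (⟪y, W⟫ : ℝ)^2 ≤ (‖y‖ * ‖W‖)^2 := by
      have h1 := abs_real_inner_le_norm y W
      nlinarith [sq_abs (⟪y, W⟫ : ℝ), abs_nonneg (⟪y, W⟫ : ℝ)]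
    have hkk2 : kk = ((‖y‖ * ‖W‖)^2 - (⟪y, W⟫ : ℝ)^2) / ‖y‖^3 := by
      rw [hkkdef, hadef]
      field_simp
    have hkk : 0 ≤ kk := by
      rw [hkk2]
      exact div_nonneg (by linarith [hCS]) (by positivity)
    have hcase : 0 < kk ∨ ∃ μ : ℝ, μ ≠ 0 ∧ ((a, cc) : ℝ × ℝ) = μ • p0 := by
      rcases lt_or_eq_of_le hkk with h | h
      · exact Or.inl h
      · right
        have hnum0 : (‖y‖ * ‖W‖)^2 - (⟪y, W⟫ : ℝ)^2 = 0 := by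
          have h3 : ((‖y‖ * ‖W‖)^2 - (⟪y, W⟫ : ℝ)^2) / ‖y‖^3 = 0 := by rw [← hkk2, ← h]
          exact (div_eq_zero_iff.1 h3).resolve_right (pow_pos hu0 3).ne'
        have hkeyμ : ∀ c : ℝ, c ≠ 0 → ‖y‖ • W = c • y → ∃ μ : ℝ, μ ≠ 0 ∧ W = μ • y := by
          intro c hc hyw
          refine ⟨‖y‖⁻¹ * c, mul_ne_zero (inv_ne_zero hu0.ne') hc, ?_⟩
          calc W = ‖y‖⁻¹ • (‖y‖ • W) := by
                rw [smul_smul, inv_mul_cancel₀ hu0.ne', one_smul]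
            _ = ‖y‖⁻¹ • (c • y) := by rw [hyw]
            _ = (‖y‖⁻¹ * c) • y := by rw [smul_smul]
        obtain ⟨μ, hμ, hWy⟩ : ∃ μ : ℝ, μ ≠ 0 ∧ W = μ • y := by
          have hW0' : (0:ℝ) < ‖W‖ := norm_pos_iff.2 hW0
          have h5 : ((⟪y, W⟫ : ℝ) - ‖y‖ * ‖W‖) * ((⟪y, W⟫ : ℝ) + ‖y‖ * ‖W‖) = 0 := by
            nlinarith [hnum0]
          rcases mul_eq_zero.1 h5 with h6 | h6
          · have h7 : (⟪y, W⟫ : ℝ) = ‖y‖ * ‖W‖ := by linarith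
            have h8 := inner_eq_norm_mul_iff_real.1 h7
            exact hkeyμ ‖W‖ hW0'.ne' h8.symm
          · have h7 : (⟪y, -W⟫ : ℝ) = ‖y‖ * ‖-W‖ := by
              rw [inner_neg_right, norm_neg]; linarith
            have h8 := inner_eq_norm_mul_iff_real.1 h7
            rw [norm_neg, smul_neg] at h8
            have h9 : ‖y‖ • W = (-‖W‖) • y := by
              rw [neg_smul]
              have h10 := congrArg (fun z : E n => -z) h8
              simpa using h10.symm
            exact hkeyμ (-‖W‖) (neg_ne_zero.2 hW0'.ne') h9
        refine ⟨μ, hμ, ?_⟩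
        have ha' : a = μ * ‖y‖ := by
          rw [hadef, hWy, real_inner_smul_right, real_inner_self_eq_norm_sq]
          field_simp
        have hc' : cc = μ * (⟪x, y⟫ : ℝ) := by
          rw [hccdef, hWy, real_inner_smul_right]
        rw [ha', hc', hp0def]
        simp [Prod.smul_mk, smul_eq_mul]
    have hkey := FinslerAux.key2d hf hhom2 hpos2 hPu2 hPuu2 hp0 ((a, cc)) kk hkk hcase
    rw [hform, hval, hk0']
    nlinarith [hkey]
end
end
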